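/- arXiv:1611.02130 — 5 statements merged into one kernel-verified Lean document; each statement's English description precedes it below -/
import Mathlib

section
/- In the quantum algebra U_q(sl_2), for every natural number i, the identity E^i F^i = ∏_{h=1}^{i} (Λ - q^{1-2h} K - q^{2h-1} K^{-1}) / (q - q^{-1})^2 holds, where Λ = (q-q^{-1})^2 EF + q^{-1}K + qK^{-1} is the normalized Casimir element. -/
/-- In any algebra satisfying the defining relations of the quantum
algebra `U_q(sl₂)`, for every natural number `i` one has
`E^i F^i = ∏_{h=1}^{i} (Λ - q^{1-2h} K - q^{2h-1} K⁻¹)/(q-q⁻¹)²`,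
where `Λ = (q-q⁻¹)² EF + q⁻¹ K + q K⁻¹` is the normalized Casimir element. -/
theorem uq_pow_E_pow_F (F : Type*) [Field F] (q : F) (hq0 : q ≠ 0) (hq4 : q ^ 4 ≠ 1)
    (U : Type*) [Ring U] [Algebra F U] (E K Kinv Fg : U)
    (hKKinv : K * Kinv = 1) (hKinvK : Kinv * K = 1)
    (hKE : K * E = q ^ 2 • (E * K))
    (hKF : K * Fg = (q ^ 2)⁻¹ • (Fg * K))
    (hEF : E * Fg - Fg * E = (q - q⁻¹)⁻¹ • (K - Kinv))
    (Lam : U) (hLam : Lam = (q - q⁻¹) ^ 2 • (E * Fg) + q⁻¹ • K + q • Kinv) :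
    ∀ i : ℕ,
      E ^ i * Fg ^ i =
        ((List.range i).map (fun h : ℕ =>
          ((q - q⁻¹) ^ 2)⁻¹ •
            (Lam - q ^ (1 - 2 * ((h : ℤ) + 1)) • K
                 - q ^ (2 * ((h : ℤ) + 1) - 1) • Kinv))).prod := by
  have hq2 : (q ^ 2 : F) ≠ 0 := pow_ne_zero _ hq0
  have hq21 : (q ^ 2 - 1 : F) ≠ 0 := by
    intro h
    apply hq4
    have h2 : (q ^ 2 : F) = 1 := by
      have := sub_eq_zero.mp h; exact this
    calc (q:F) ^ 4 = (q ^ 2) ^ 2 := by ring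
      _ = 1 := by rw [h2, one_pow]
  have hnz : (-q ^ 2 + q ^ 4 : F) ≠ 0 := by
    have he : (-q ^ 2 + q ^ 4 : F) = q ^ 2 * (q ^ 2 - 1) := by ring
    rw [he]; exact mul_ne_zero hq2 hq21
  have ht : q - q⁻¹ ≠ 0 := by
    intro h
    apply hq4
    have h1 : q = q⁻¹ := sub_eq_zero.mp h
    have h2 : q * q = 1 := by
      rw [mul_comm]
      nth_rewrite 2 [h1]
      exact mul_inv_cancel₀ hq0
    calc q ^ 4 = (q * q) * (q * q) := by ring
      _ = 1 := by rw [h2, mul_one]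
  -- derived commutation relations
  have hEK : E * K = (q ^ 2)⁻¹ • (K * E) := by
    rw [hKE, smul_smul, inv_mul_cancel₀ hq2, one_smul]
  have hEKinv : E * Kinv = q ^ 2 • (Kinv * E) := by
    have h : Kinv * (K * E) * Kinv = Kinv * (q ^ 2 • (E * K)) * Kinv := by rw [hKE]
    calc E * Kinv = Kinv * (K * E) * Kinv := by
          rw [← mul_assoc, hKinvK, one_mul]
      _ = Kinv * (q ^ 2 • (E * K)) * Kinv := h
      _ = q ^ 2 • (Kinv * E * (K * Kinv)) := by
          rw [mul_smul_comm, smul_mul_assoc, mul_assoc, mul_assoc, mul_assoc]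
      _ = q ^ 2 • (Kinv * E) := by rw [hKKinv, mul_one]
  have hKinvF : Kinv * Fg = q ^ 2 • (Fg * Kinv) := by
    have h : Kinv * (K * Fg) * Kinv = Kinv * ((q ^ 2)⁻¹ • (Fg * K)) * Kinv := by rw [hKF]
    have h2 : Fg * Kinv = (q ^ 2)⁻¹ • (Kinv * Fg) := by
      calc Fg * Kinv = Kinv * (K * Fg) * Kinv := by
            rw [← mul_assoc, hKinvK, one_mul]
        _ = Kinv * ((q ^ 2)⁻¹ • (Fg * K)) * Kinv := h
        _ = (q ^ 2)⁻¹ • (Kinv * Fg * (K * Kinv)) := by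
            rw [mul_smul_comm, smul_mul_assoc, mul_assoc, mul_assoc, mul_assoc]
        _ = (q ^ 2)⁻¹ • (Kinv * Fg) := by rw [hKKinv, mul_one]
    rw [h2, smul_smul, mul_inv_cancel₀ hq2, one_smul]
  have hKEF : K * (E * Fg) = (E * Fg) * K := by
    calc K * (E * Fg) = (K * E) * Fg := by rw [mul_assoc]
      _ = q ^ 2 • (E * (K * Fg)) := by rw [hKE, smul_mul_assoc, mul_assoc]
      _ = q ^ 2 • ((q ^ 2)⁻¹ • (E * (Fg * K))) := by rw [hKF, mul_smul_comm]
      _ = (E * Fg) * K := by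
          rw [smul_smul, mul_inv_cancel₀ hq2, one_smul, mul_assoc]
  have hKinvEF : Kinv * (E * Fg) = (E * Fg) * Kinv := by
    have hKinvE : Kinv * E = (q ^ 2)⁻¹ • (E * Kinv) := by
      rw [hEKinv, smul_smul, inv_mul_cancel₀ hq2, one_smul]
    calc Kinv * (E * Fg) = (Kinv * E) * Fg := by rw [mul_assoc]
      _ = (q ^ 2)⁻¹ • (E * (Kinv * Fg)) := by rw [hKinvE, smul_mul_assoc, mul_assoc]
      _ = (q ^ 2)⁻¹ • (q ^ 2 • (E * (Fg * Kinv))) := by rw [hKinvF, mul_smul_comm]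
      _ = (E * Fg) * Kinv := by
          rw [smul_smul, inv_mul_cancel₀ hq2, one_smul, mul_assoc]
  have hLamEF : Lam * (E * Fg) = (E * Fg) * Lam := by
    rw [hLam]
    simp only [add_mul, mul_add, smul_mul_assoc, mul_smul_comm, hKEF, hKinvEF]
  have hKinvE : Kinv * E = (q ^ 2)⁻¹ • (E * Kinv) := by
    rw [hEKinv, smul_smul, inv_mul_cancel₀ hq2, one_smul]
  have hFE : Fg * E = E * Fg - (q - q⁻¹)⁻¹ • (K - Kinv) := by
    rw [← hEF]; abel
  have hELam : E * Lam = Lam * E := by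
    rw [hLam, mul_add, mul_add, add_mul, add_mul, mul_smul_comm, mul_smul_comm,
      mul_smul_comm, smul_mul_assoc, smul_mul_assoc, smul_mul_assoc,
      mul_assoc E Fg E, hFE, hKE, hKinvE]
    simp only [mul_sub, mul_smul_comm, smul_sub, smul_smul]
    have hqq : q * q⁻¹ = 1 := mul_inv_cancel₀ hq0
    have htv : (q - q⁻¹) * (q - q⁻¹)⁻¹ = 1 := mul_inv_cancel₀ ht
    have hw : (q ^ 2 : F) * (q ^ 2)⁻¹ = 1 := mul_inv_cancel₀ hq2
    match_scalars
    · ring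
    · linear_combination (q - q⁻¹) * htv - q * hqq
    · linear_combination -(q - q⁻¹) * htv + (q * (q ^ 2)⁻¹) * hqq - q⁻¹ * hw
  have ht2 : ((q - q⁻¹) ^ 2 : F) ≠ 0 := pow_ne_zero _ ht
  set G : ℕ → U := fun h : ℕ =>
    ((q - q⁻¹) ^ 2)⁻¹ •
      (Lam - q ^ (1 - 2 * ((h : ℤ) + 1)) • K - q ^ (2 * ((h : ℤ) + 1) - 1) • Kinv) with hGdef
  have hG0 : G 0 = E * Fg := by
    simp only [hGdef]
    norm_num
    rw [hLam]
    have hsub : (q - q⁻¹) ^ 2 • (E * Fg) + q⁻¹ • K + q • Kinv - q⁻¹ • K - q • Kinv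
        = (q - q⁻¹) ^ 2 • (E * Fg) := by abel
    rw [hsub, smul_smul, inv_mul_cancel₀ ht2, one_smul]
  have hzpow2 : ((q : F) ^ 2) = q ^ (2 : ℤ) := by
    rw [zpow_two, sq]
  have hEG : ∀ h : ℕ, E * G h = G (h + 1) * E := by
    intro h
    simp only [hGdef]
    rw [mul_smul_comm, smul_mul_assoc]
    congr 1
    rw [mul_sub, mul_sub, sub_mul, sub_mul, mul_smul_comm, mul_smul_comm,
      smul_mul_assoc, smul_mul_assoc, hELam, hEK, hEKinv, smul_smul, smul_smul]
    have hsa : (q ^ (1 - 2 * ((h : ℤ) + 1)) * (q ^ 2)⁻¹ : F)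
        = q ^ (1 - 2 * (((h + 1 : ℕ) : ℤ) + 1)) := by
      rw [hzpow2, ← zpow_neg, ← zpow_add₀ hq0]
      congr 1 <;> (push_cast; ring)
    have hsb : (q ^ (2 * ((h : ℤ) + 1) - 1) * q ^ 2 : F)
        = q ^ (2 * (((h + 1 : ℕ) : ℤ) + 1) - 1) := by
      rw [hzpow2, ← zpow_add₀ hq0]
      congr 1 <;> (push_cast; ring)
    rw [hsa, hsb]
  have hGEF : ∀ h : ℕ, G h * (E * Fg) = (E * Fg) * G h := by
    intro h
    simp only [hGdef]
    rw [smul_mul_assoc, mul_smul_comm]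
    congr 1
    simp only [sub_mul, mul_sub, smul_mul_assoc, mul_smul_comm, hLamEF, hKEF, hKinvEF]
  have hElist : ∀ l : List ℕ, E * (l.map G).prod = (l.map (fun h => G (h + 1))).prod * E := by
    intro l
    induction l with
    | nil => simp
    | cons a t ih =>
      simp only [List.map_cons, List.prod_cons]
      rw [← mul_assoc, hEG a, mul_assoc, ih, ← mul_assoc]
  have hEFlist : ∀ l : List ℕ, (l.map G).prod * (E * Fg) = (E * Fg) * (l.map G).prod := by
    intro l
    induction l with
    | nil => simp
    | cons a t ih =>
      simp only [List.map_cons, List.prod_cons]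
      rw [mul_assoc, ih, ← mul_assoc, hGEF a, mul_assoc]
  intro i
  induction i with
  | zero => simp
  | succ n ih =>
    have hmap : ((List.range n).map fun h => G (h + 1))
        = (((List.range n).map Nat.succ).map G) := by
      rw [List.map_map]
      rfl
    rw [pow_succ', pow_succ, mul_assoc E (E ^ n), ← mul_assoc (E ^ n) (Fg ^ n) Fg,
      ← mul_assoc E, ih, hElist, mul_assoc, hmap, hEFlist, ← hmap, ← hG0,
      List.range_succ_eq_map, List.map_cons, List.prod_cons, hmap]
end

section
/- In the quantum algebra U_q(sl_2), for every natural number i, the identity F^i E^i = ∏_{h=1}^{i} (Λ - q^{2h-1} K - q^{1-2h} K^{-1}) / (q - q^{-1})^2 holds, where Λ is the normalized Casimir element. -/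
/-!
Let `C h = (Λ - q^{2h+1} K - q^{-2h-1} K⁻¹)/(q - q⁻¹)²`. Then `C 0 = F E`, and since the
Casimir element `Λ` commutes with `F` while `F K = q² K F`, moving `F` across `C h` turns it
into `C (h + 1)`. Hence `F^{i+1} E^{i+1} = F (C 0 ⋯ C (i-1)) E = C 1 ⋯ C i · F E`, and
`F E = C 0` commutes with every `C h`, being built from `F E`, `K`, `K⁻¹`, all of which commute
with `F E`.
-/

theorem SemiconjBy.list_prod_map {M ι : Type*} [Monoid M] {a : M} {f g : ι → M}
    (h : ∀ i, SemiconjBy a (f i) (g i)) (l : List ι) :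
    SemiconjBy a (l.map f).prod (l.map g).prod := by
  induction l with
  | nil => exact SemiconjBy.one_right a
  | cons i l ih => exact (h i).mul_right ih

theorem pow_mul_pow_eq_prod_range {M : Type*} [Monoid M] (F E : M) (C : ℕ → M)
    (hC0 : C 0 = F * E) (hshift : ∀ h, SemiconjBy F (C h) (C (h + 1)))
    (hcomm : ∀ h, Commute (F * E) (C h)) (i : ℕ) :
    F ^ i * E ^ i = ((List.range i).map C).prod := by
  induction i with
  | zero => simp
  | succ i ih =>
    have hprod : Commute (F * E) ((List.range i).map fun h ↦ C (h + 1)).prod :=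
      Commute.list_prod_right _ _ (by simp [hcomm])
    calc F ^ (i + 1) * E ^ (i + 1) = F * (F ^ i * E ^ i) * E := by
          rw [pow_succ', pow_succ, mul_assoc, mul_assoc, mul_assoc]
      _ = ((List.range i).map fun h ↦ C (h + 1)).prod * (F * E) := by
          rw [ih, (SemiconjBy.list_prod_map hshift _).eq, mul_assoc]
      _ = ((List.range (i + 1)).map C).prod := by
          rw [← hprod.eq, ← hC0, List.prod_range_succ']

section Algebra

variable {𝕜 U : Type*} [Field 𝕜] [Ring U] [Algebra 𝕜 U]

theorem mul_eq_inv_smul_of_mul_eq_smul {K X : U} {c : 𝕜} (hc : c ≠ 0)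
    (h : K * X = c • (X * K)) : X * K = c⁻¹ • (K * X) := by
  rw [h, smul_smul, inv_mul_cancel₀ hc, one_smul]

theorem inv_mul_eq_inv_smul_of_mul_eq_smul {K Kinv X : U} {c : 𝕜} (hc : c ≠ 0)
    (hKKinv : K * Kinv = 1) (hKinvK : Kinv * K = 1) (h : K * X = c • (X * K)) :
    Kinv * X = c⁻¹ • (X * Kinv) :=
  calc Kinv * X = Kinv * (X * K) * Kinv := by
        rw [mul_assoc, mul_assoc, hKKinv, mul_one]
    _ = c⁻¹ • (X * Kinv) := by
        rw [mul_eq_inv_smul_of_mul_eq_smul hc h, mul_smul_comm, smul_mul_assoc, ← mul_assoc,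
          hKinvK, one_mul]

theorem commute_mul_of_mul_eq_smul {K X Y : U} {a b : 𝕜} (hab : a * b = 1)
    (hX : K * X = a • (X * K)) (hY : K * Y = b • (Y * K)) : Commute K (X * Y) :=
  calc K * (X * Y) = (a * b) • (X * (Y * K)) := by
        rw [← mul_assoc, hX, smul_mul_assoc, mul_assoc, hY, mul_smul_comm, smul_smul]
    _ = X * Y * K := by rw [hab, one_smul, mul_assoc]

structure Uqsl2Relations (q : 𝕜) (E F K Kinv : U) : Prop where
  K_mul_Kinv : K * Kinv = 1
  Kinv_mul_K : Kinv * K = 1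
  K_mul_E : K * E = q ^ 2 • (E * K)
  K_mul_F : K * F = (q ^ 2)⁻¹ • (F * K)
  E_mul_F_sub : E * F - F * E = (q - q⁻¹)⁻¹ • (K - Kinv)

def casimir (q : 𝕜) (E F K Kinv : U) : U :=
  (q - q⁻¹) ^ 2 • (F * E) + q • K + q⁻¹ • Kinv

/-- Indexed from `0`: `casimirFactor q Λ K Kinv h` is the factor numbered `h + 1`. -/
def casimirFactor (q : 𝕜) (Λ K Kinv : U) (h : ℕ) : U :=
  ((q - q⁻¹) ^ 2)⁻¹ •
    (Λ - q ^ (2 * ((h : ℤ) + 1) - 1) • K - q ^ (1 - 2 * ((h : ℤ) + 1)) • Kinv)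

theorem sub_inv_ne_zero_of_pow_four_ne_one {q : 𝕜} (hq0 : q ≠ 0) (hq4 : q ^ 4 ≠ 1) :
    q - q⁻¹ ≠ 0 := by
  intro h
  apply hq4
  have hq2 : q ^ 2 = 1 := by
    rw [sq, ← mul_inv_cancel₀ hq0, ← sub_eq_zero, ← mul_sub, h, mul_zero]
  rw [show 4 = 2 * 2 from rfl, pow_mul, hq2, one_pow]

theorem casimirFactor_casimir_zero {q : 𝕜} {E F K Kinv : U} (hq : q - q⁻¹ ≠ 0) :
    casimirFactor q (casimir q E F K Kinv) K Kinv 0 = F * E := by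
  have hcancel :
      casimir q E F K Kinv - q • K - q⁻¹ • Kinv = (q - q⁻¹) ^ 2 • (F * E) := by
    rw [casimir]; abel
  rw [casimirFactor, show 2 * (((0 : ℕ) : ℤ) + 1) - 1 = 1 by norm_num,
    show 1 - 2 * (((0 : ℕ) : ℤ) + 1) = -1 by norm_num, zpow_one, zpow_neg_one, hcancel,
    smul_smul, inv_mul_cancel₀ (pow_ne_zero 2 hq), one_smul]

namespace Uqsl2Relations

variable {q : 𝕜} {E F K Kinv : U}

theorem E_mul_F (hU : Uqsl2Relations q E F K Kinv) :
    E * F = F * E + (q - q⁻¹)⁻¹ • (K - Kinv) :=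
  sub_eq_iff_eq_add'.mp hU.E_mul_F_sub

theorem F_mul_K (hU : Uqsl2Relations q E F K Kinv) (hq : q ≠ 0) :
    F * K = q ^ 2 • (K * F) := by
  simpa using mul_eq_inv_smul_of_mul_eq_smul (inv_ne_zero (pow_ne_zero 2 hq)) hU.K_mul_F

theorem Kinv_mul_F (hU : Uqsl2Relations q E F K Kinv) (hq : q ≠ 0) :
    Kinv * F = q ^ 2 • (F * Kinv) := by
  simpa using inv_mul_eq_inv_smul_of_mul_eq_smul (inv_ne_zero (pow_ne_zero 2 hq))
    hU.K_mul_Kinv hU.Kinv_mul_K hU.K_mul_F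

theorem F_mul_Kinv (hU : Uqsl2Relations q E F K Kinv) (hq : q ≠ 0) :
    F * Kinv = (q ^ 2)⁻¹ • (Kinv * F) := by
  rw [hU.Kinv_mul_F hq, smul_smul, inv_mul_cancel₀ (pow_ne_zero 2 hq), one_smul]

theorem Kinv_mul_E (hU : Uqsl2Relations q E F K Kinv) (hq : q ≠ 0) :
    Kinv * E = (q ^ 2)⁻¹ • (E * Kinv) :=
  inv_mul_eq_inv_smul_of_mul_eq_smul (pow_ne_zero 2 hq) hU.K_mul_Kinv hU.Kinv_mul_K hU.K_mul_E

theorem commute_K_F_mul_E (hU : Uqsl2Relations q E F K Kinv) (hq : q ≠ 0) :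
    Commute K (F * E) :=
  commute_mul_of_mul_eq_smul (inv_mul_cancel₀ (pow_ne_zero 2 hq)) hU.K_mul_F hU.K_mul_E

theorem commute_Kinv_F_mul_E (hU : Uqsl2Relations q E F K Kinv) (hq : q ≠ 0) :
    Commute Kinv (F * E) :=
  commute_mul_of_mul_eq_smul (mul_inv_cancel₀ (pow_ne_zero 2 hq)) (hU.Kinv_mul_F hq)
    (hU.Kinv_mul_E hq)

theorem commute_casimir_F_mul_E (hU : Uqsl2Relations q E F K Kinv) (hq : q ≠ 0) :
    Commute (casimir q E F K Kinv) (F * E) :=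
  (((Commute.refl _).smul_left _).add_left ((hU.commute_K_F_mul_E hq).smul_left _)).add_left
    ((hU.commute_Kinv_F_mul_E hq).smul_left _)

theorem casimir_mul_F (hU : Uqsl2Relations q E F K Kinv) (hq : q ≠ 0) :
    casimir q E F K Kinv * F = F * casimir q E F K Kinv := by
  calc casimir q E F K Kinv * F
        = (q - q⁻¹) ^ 2 • (F * (E * F)) + q • (K * F) + q⁻¹ • (Kinv * F) := by
          simp only [casimir, add_mul, smul_mul_assoc, mul_assoc]
    _ = (q - q⁻¹) ^ 2 • (F * (F * E + (q - q⁻¹)⁻¹ • (K - Kinv)))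
          + q • ((q ^ 2)⁻¹ • (F * K)) + q⁻¹ • (q ^ 2 • (F * Kinv)) := by
          rw [hU.E_mul_F, hU.K_mul_F, hU.Kinv_mul_F hq]
    _ = F * casimir q E F K Kinv := by
          simp only [casimir, mul_add, mul_sub, mul_smul_comm, smul_add, smul_sub]
          match_scalars <;> field_simp <;> ring

theorem semiconjBy_F_casimirFactor (hU : Uqsl2Relations q E F K Kinv) (hq : q ≠ 0) (h : ℕ) :
    SemiconjBy F (casimirFactor q (casimir q E F K Kinv) K Kinv h)
      (casimirFactor q (casimir q E F K Kinv) K Kinv (h + 1)) := by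
  have hexp₁ :
      q ^ (2 * ((h : ℤ) + 1) - 1) * q ^ 2 = q ^ (2 * (((h + 1 : ℕ) : ℤ) + 1) - 1) := by
    rw [← zpow_natCast, ← zpow_add₀ hq]; push_cast; ring_nf
  have hexp₂ : q ^ (1 - 2 * ((h : ℤ) + 1)) * (q ^ 2)⁻¹ =
      q ^ (1 - 2 * (((h + 1 : ℕ) : ℤ) + 1)) := by
    rw [← zpow_natCast, ← zpow_neg, ← zpow_add₀ hq]; push_cast; ring_nf
  simp only [SemiconjBy, casimirFactor, mul_smul_comm, smul_mul_assoc, mul_sub, sub_mul,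
    hU.casimir_mul_F hq, hU.F_mul_K hq, hU.F_mul_Kinv hq, smul_smul, ← hexp₁, ← hexp₂]

theorem commute_F_mul_E_casimirFactor (hU : Uqsl2Relations q E F K Kinv) (hq : q ≠ 0) (h : ℕ) :
    Commute (F * E) (casimirFactor q (casimir q E F K Kinv) K Kinv h) :=
  (((hU.commute_casimir_F_mul_E hq).symm.sub_right
    ((hU.commute_K_F_mul_E hq).symm.smul_right _)).sub_right
      ((hU.commute_Kinv_F_mul_E hq).symm.smul_right _)).smul_right _

end Uqsl2Relations

end Algebra

/-- In any algebra satisfying the defining relations of the quantum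
algebra `U_q(sl₂)`, for every natural number `i` one has
`F^i E^i = ∏_{h=1}^{i} (Λ - q^{2h-1} K - q^{1-2h} K⁻¹)/(q-q⁻¹)²`,
where `Λ = (q-q⁻¹)² FE + q K + q⁻¹ K⁻¹` is the normalized Casimir element. -/
theorem uq_pow_F_pow_E (F : Type*) [Field F] (q : F) (hq0 : q ≠ 0) (hq4 : q ^ 4 ≠ 1)
    (U : Type*) [Ring U] [Algebra F U] (E K Kinv Fg : U)
    (hKKinv : K * Kinv = 1) (hKinvK : Kinv * K = 1)
    (hKE : K * E = q ^ 2 • (E * K))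
    (hKF : K * Fg = (q ^ 2)⁻¹ • (Fg * K))
    (hEF : E * Fg - Fg * E = (q - q⁻¹)⁻¹ • (K - Kinv))
    (Lam : U) (hLam : Lam = (q - q⁻¹) ^ 2 • (Fg * E) + q • K + q⁻¹ • Kinv) :
    ∀ i : ℕ,
      Fg ^ i * E ^ i =
        ((List.range i).map (fun h : ℕ =>
          ((q - q⁻¹) ^ 2)⁻¹ •
            (Lam - q ^ (2 * ((h : ℤ) + 1) - 1) • K
                 - q ^ (1 - 2 * ((h : ℤ) + 1)) • Kinv))).prod := by
  have hU : Uqsl2Relations q E Fg K Kinv := ⟨hKKinv, hKinvK, hKE, hKF, hEF⟩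
  rw [← casimir] at hLam
  subst hLam
  exact pow_mul_pow_eq_prod_range Fg E _
    (casimirFactor_casimir_zero (sub_inv_ne_zero_of_pow_four_ne_one hq0 hq4))
    (hU.semiconjBy_F_casimirFactor hq0)
    (hU.commute_F_mul_E_casimirFactor hq0)
end

section
/- For any nonzero scalar λ in F, the Verma U_q(sl_2)-module M(λ) is irreducible if and only if λ is not of the form ±q^n for any natural number n. -/
/-!
If `λ = ±qⁿ`, the coefficient of `E` on `m_{n+1}` vanishes, so the span of the `m_i` with
`i > n` is a proper nonzero submodule.  Otherwise every coefficient of `E` and `F` is nonzero: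
applying `E` to a nonzero vector lowers its top degree without killing it, so every nonzero
submodule contains `m_0`, and then `F` generates all of `M(λ)` from `m_0`.
-/

open Finsupp

section QuantumArithmetic

variable {F : Type*} [Field F]

theorem pow_sub_inv_pow_ne_zero {q : F} (hq : q ≠ 0) {n : ℕ} (h : q ^ (2 * n) ≠ 1) :
    q ^ n - q⁻¹ ^ n ≠ 0 := by
  intro hzero
  apply h
  rw [two_mul, pow_add]
  nth_rw 2 [sub_eq_zero.mp hzero]
  rw [← mul_pow, mul_inv_cancel₀ hq, one_pow]

theorem mul_zpow_neg_sub_inv_mul_zpow_eq_zero_iff {lam q : F} (hlam : lam ≠ 0) (hq : q ≠ 0)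
    (n : ℕ) : lam * q ^ (-(n : ℤ)) - lam⁻¹ * q ^ (n : ℤ) = 0 ↔ lam = q ^ n ∨ lam = -q ^ n := by
  rw [← sq_eq_sq_iff_eq_or_eq_neg, zpow_neg, zpow_natCast, sub_eq_zero,
    ← mul_right_inj' (mul_ne_zero hlam (pow_ne_zero n hq))]
  field_simp

end QuantumArithmetic

namespace Finsupp

section CommSemiring

variable {R : Type*} [CommSemiring R]

theorem supported_le_comap_of_single_mem {ι : Type*} (T : Module.End R (ι →₀ R)) (s : Set ι)
    (h : ∀ i ∈ s, T (single i 1) ∈ supported R R s) :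
    supported R R s ≤ (supported R R s).comap T :=
  (supported_eq_span_single R s).le.trans <|
    Submodule.span_le.mpr <| by rintro _ ⟨i, hi, rfl⟩; exact h i hi

theorem supported_le_comap_of_diagonal {ι : Type*} (T : Module.End R (ι →₀ R)) (c : ι → R)
    (hT : ∀ i, T (single i 1) = c i • single i 1) (s : Set ι) :
    supported R R s ≤ (supported R R s).comap T :=
  supported_le_comap_of_single_mem T s fun i hi =>
    hT i ▸ Submodule.smul_mem _ _ (single_mem_supported R 1 hi)

variable (T : Module.End R (ℕ →₀ R)) (c : ℕ → R)

theorem supported_Ioi_le_comap_of_raising (hT : ∀ i, T (single i 1) = c i • single (i + 1) 1)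
    (n : ℕ) : supported R R (Set.Ioi n) ≤ (supported R R (Set.Ioi n)).comap T :=
  supported_le_comap_of_single_mem T _ fun i hi =>
    hT i ▸ Submodule.smul_mem _ _ (single_mem_supported R 1 (Nat.lt_succ_of_lt hi))

theorem supported_Ioi_le_comap_of_lowering
    (hT : ∀ i, T (single (i + 1) 1) = c i • single i 1) {n : ℕ} (hn : c n = 0) :
    supported R R (Set.Ioi n) ≤ (supported R R (Set.Ioi n)).comap T := by
  refine supported_le_comap_of_single_mem T _ fun i hi => ?_
  obtain ⟨i, rfl⟩ : ∃ j, i = j + 1 := Nat.exists_eq_add_one.mpr (Nat.zero_lt_of_lt hi)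
  rw [hT]
  rcases (Nat.lt_succ_iff.mp hi).lt_or_eq with hlt | rfl
  · exact Submodule.smul_mem _ _ (single_mem_supported R 1 hlt)
  · rw [hn, zero_smul]
    exact Submodule.zero_mem _

theorem apply_eq_mul_apply_succ_of_lowering (h0 : T (single 0 1) = 0)
    (hT : ∀ i, T (single (i + 1) 1) = c i • single i 1) (v : ℕ →₀ R) (j : ℕ) :
    T v j = c j * v (j + 1) := by
  have hcoord : lapply j ∘ₗ T = c j • lapply (j + 1) := by
    refine Finsupp.basisSingleOne.ext fun i => ?_
    cases i with
    | zero => simp [h0]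
    | succ i =>
      simp only [coe_basisSingleOne, LinearMap.coe_comp, Function.comp_apply, hT,
        LinearMap.smul_apply, lapply_apply, smul_apply, single_apply, smul_eq_mul,
        add_left_inj]
      split_ifs <;> simp_all
  exact LinearMap.congr_fun hcoord v

end CommSemiring

section Field

variable {F : Type*} [Field F] (T : Module.End F (ℕ →₀ F)) (c : ℕ → F)

/-- Repeatedly applying a lowering operator with nonzero coefficients to a nonzero vector ends
at a nonzero multiple of `single 0 1`. -/
theorem single_zero_mem_of_lowering (h0 : T (single 0 1) = 0)
    (hT : ∀ i, T (single (i + 1) 1) = c i • single i 1) (hc : ∀ i, c i ≠ 0)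
    {W : Submodule F (ℕ →₀ F)} (hW : W ≤ W.comap T) {w : ℕ →₀ F} (hwW : w ∈ W) (hw : w ≠ 0) :
    single 0 1 ∈ W := by
  obtain ⟨d, hd⟩ : ∃ d, ∀ j, d < j → w j = 0 := by
    obtain ⟨d, hd⟩ := w.support.bddAbove
    exact ⟨d, fun j hj => notMem_support_iff.mp fun hj' => (hd hj').not_gt hj⟩
  induction d generalizing w with
  | zero =>
    have hw0 : w 0 ≠ 0 := fun h => hw (by ext (_ | j); exacts [h, hd (j + 1) j.succ_pos])
    have hsingle : single 0 1 = (w 0)⁻¹ • w := by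
      ext (_ | j)
      · simp [hw0]
      · simp [hd (j + 1) j.succ_pos]
    exact hsingle ▸ W.smul_mem _ hwW
  | succ d ih =>
    by_cases htop : w (d + 1) = 0
    · refine ih hwW hw fun j hj => ?_
      rcases (Nat.succ_le_of_lt hj).lt_or_eq with hlt | rfl
      exacts [hd j hlt, htop]
    · have hTw : T w d ≠ 0 := by
        rw [apply_eq_mul_apply_succ_of_lowering T c h0 hT]
        exact mul_ne_zero (hc d) htop
      refine ih (hW hwW) (fun h => hTw (by rw [h, coe_zero, Pi.zero_apply])) fun j hj => ?_
      rw [apply_eq_mul_apply_succ_of_lowering T c h0 hT, hd (j + 1) (by omega), mul_zero]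

theorem eq_top_of_raising (hT : ∀ i, T (single i 1) = c i • single (i + 1) 1)
    (hc : ∀ i, c i ≠ 0) {W : Submodule F (ℕ →₀ F)} (hW : W ≤ W.comap T)
    (h0 : single 0 1 ∈ W) : W = ⊤ := by
  have hsingle : ∀ i, single i (1 : F) ∈ W := by
    intro i
    induction i with
    | zero => exact h0
    | succ i ih =>
      have hTi := W.smul_mem (c i)⁻¹ (hW ih)
      rwa [hT, smul_smul, inv_mul_cancel₀ (hc i), one_smul] at hTi
  rw [eq_top_iff, ← Finsupp.basisSingleOne.span_eq, Submodule.span_le]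
  rintro _ ⟨i, rfl⟩
  simpa using hsingle i

end Field

end Finsupp

/-- Assume `q` is not a root of unity.  The Verma module `M(λ)`
(realized on `ℕ →₀ F` with its defining basis action) is irreducible (i.e. the only
subspaces invariant under `E`, `F`, `K`, `K⁻¹` are `⊥` and `⊤`) if and only if
`λ ≠ ±qⁿ` for every natural number `n`. -/
theorem uq_verma_irreducible_iff (F : Type*) [Field F] (q : F) (hq0 : q ≠ 0)
    (hqroot : ∀ n : ℕ, n ≠ 0 → q ^ n ≠ 1)
    (lam : F) (hlam : lam ≠ 0)
    (eM fM kM kinvM : Module.End F (ℕ →₀ F))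
    (hk : ∀ i : ℕ, kM (Finsupp.single i 1) =
        (lam * q ^ (-2 * (i : ℤ))) • Finsupp.single i 1)
    (hkinv : ∀ i : ℕ, kinvM (Finsupp.single i 1) =
        (lam⁻¹ * q ^ (2 * (i : ℤ))) • Finsupp.single i 1)
    (hf : ∀ i : ℕ, fM (Finsupp.single i 1) =
        ((q ^ (i + 1) - q⁻¹ ^ (i + 1)) / (q - q⁻¹)) • Finsupp.single (i + 1) 1)
    (he0 : eM (Finsupp.single 0 1) = 0)
    (he : ∀ i : ℕ, eM (Finsupp.single (i + 1) 1) =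
        ((lam * q ^ (-(i : ℤ)) - lam⁻¹ * q ^ (i : ℤ)) / (q - q⁻¹)) • Finsupp.single i 1) :
    (∀ W : Submodule F (ℕ →₀ F),
        W ≤ W.comap eM → W ≤ W.comap fM → W ≤ W.comap kM → W ≤ W.comap kinvM →
        W = ⊥ ∨ W = ⊤)
      ↔ (∀ n : ℕ, lam ≠ q ^ n ∧ lam ≠ -(q ^ n)) := by
  have hqq : q - q⁻¹ ≠ 0 := by
    simpa using pow_sub_inv_pow_ne_zero hq0 (n := 1) (hqroot 2 two_ne_zero)
  constructor
  · intro hirr n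
    rw [← not_or, ← mul_zpow_neg_sub_inv_mul_zpow_eq_zero_iff hlam hq0]
    intro hzero
    rcases hirr (supported F F (Set.Ioi n))
      (supported_Ioi_le_comap_of_lowering eM _ he (by rw [hzero, zero_div]))
      (supported_Ioi_le_comap_of_raising fM _ hf n)
      (supported_le_comap_of_diagonal kM _ hk _)
      (supported_le_comap_of_diagonal kinvM _ hkinv _) with hbot | htop
    · have hmem := single_mem_supported F (1 : F) (Set.mem_Ioi.mpr n.lt_succ_self)
      simp [hbot] at hmem
    · have hmem : single 0 (1 : F) ∈ supported F F (Set.Ioi n) := htop ▸ Submodule.mem_top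
      simpa using (mem_supported' F _).mp hmem 0 (by simp)
  · intro hne W hWE hWF _ _
    refine or_iff_not_imp_left.mpr fun hW => ?_
    obtain ⟨w, hwW, hw⟩ := Submodule.exists_mem_ne_zero_of_ne_bot hW
    have hcE : ∀ i : ℕ, (lam * q ^ (-(i : ℤ)) - lam⁻¹ * q ^ (i : ℤ)) / (q - q⁻¹) ≠ 0 :=
      fun i => div_ne_zero
        (by rw [Ne, mul_zpow_neg_sub_inv_mul_zpow_eq_zero_iff hlam hq0, not_or]; exact hne i) hqq
    have hcF : ∀ i : ℕ, (q ^ (i + 1) - q⁻¹ ^ (i + 1)) / (q - q⁻¹) ≠ 0 :=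
      fun i => div_ne_zero (pow_sub_inv_pow_ne_zero hq0 (hqroot _ (by omega))) hqq
    exact eq_top_of_raising fM _ hf hcF hWF
      (single_zero_mem_of_lowering eM _ he0 he hcE hWE hwW hw)
end

section
/- For n ∈ ℕ and ε ∈ {±1}, the U_q(sl_2)-module V(n,ε) is irreducible if and only if q^{2i} ≠ 1 for all 1 ≤ i ≤ n. -/
/-!
In the basis `v_i`, `E` lowers and `F` raises the index, with coefficients `ε[n-i+1]` and
`[i+1]`, while `K^{±1}` act diagonally. If `q^{2i} = 1` for some `1 ≤ i ≤ n`, then `[i] = 0`,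
so `F v_{i-1} = 0` and the span of `v_0, …, v_{i-1}` is a proper nonzero submodule. Otherwise
all these coefficients are nonzero: `E` is nilpotent, so every nonzero submodule meets `ker E`,
which is the line through `v_0`, and `F` carries `v_0` successively to nonzero multiples of
`v_1, …, v_n`.
-/

open Submodule

section Nilpotent

variable {K V : Type*} [Field K] [AddCommGroup V] [Module K V]

theorem Submodule.pow_apply_mem_of_le_comap {e : Module.End K V} {W : Submodule K V}
    (hW : W ≤ W.comap e) {x : V} (hx : x ∈ W) (m : ℕ) : (e ^ m) x ∈ W := by
  induction m with
  | zero => simpa using hx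
  | succ m ih => rw [pow_succ', Module.End.mul_apply]; exact hW ih

theorem Submodule.exists_ne_zero_mem_ker_of_isNilpotent {e : Module.End K V} (he : IsNilpotent e)
    {W : Submodule K V} (hW : W ≤ W.comap e) (hW0 : W ≠ ⊥) :
    ∃ w ∈ W, w ≠ 0 ∧ e w = 0 := by
  classical
  obtain ⟨x, hxW, hx0⟩ := W.ne_bot_iff.1 hW0
  obtain ⟨N, hN⟩ := he
  have hkill : ∃ m, (e ^ m) x = 0 := ⟨N, by simp [hN]⟩
  obtain ⟨m, hm⟩ : ∃ m, Nat.find hkill = m + 1 :=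
    Nat.exists_eq_add_one.2 <| Nat.pos_of_ne_zero fun h =>
      hx0 (by simpa [h] using Nat.find_spec hkill)
  refine ⟨(e ^ m) x, pow_apply_mem_of_le_comap hW hxW m, Nat.find_min hkill (by omega), ?_⟩
  rw [← Module.End.mul_apply, ← pow_succ', ← hm]
  exact Nat.find_spec hkill

end Nilpotent

section QuantumInteger

variable {K : Type*} [Field K]

/-- The quantum integer `[k]`. -/
def qInt (q : K) (k : ℕ) : K := (q ^ k - q⁻¹ ^ k) / (q - q⁻¹)

theorem pow_sub_inv_pow_eq_zero_iff {q : K} (hq : q ≠ 0) (k : ℕ) :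
    q ^ k - q⁻¹ ^ k = 0 ↔ q ^ (2 * k) = 1 := by
  rw [sub_eq_zero, inv_pow, ← mul_eq_one_iff_eq_inv₀ (pow_ne_zero k hq), ← pow_add, two_mul]

theorem qInt_eq_zero_iff {q : K} (hq : q ≠ 0) (k : ℕ) :
    qInt q k = 0 ↔ q ^ (2 * k) = 1 ∨ q ^ 2 = 1 := by
  have h1 := pow_sub_inv_pow_eq_zero_iff hq 1
  rw [pow_one, pow_one, mul_one] at h1
  rw [qInt, div_eq_zero_iff, pow_sub_inv_pow_eq_zero_iff hq, h1]

theorem zpow_sub_zpow_eq_pow_sub_inv_pow (q : K) {i n : ℕ} (h : i ≤ n) :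
    q ^ ((n : ℤ) - i) - q ^ ((i : ℤ) - n) = q ^ (n - i) - q⁻¹ ^ (n - i) := by
  rw [← neg_sub (n : ℤ), ← Nat.cast_sub h, zpow_neg, zpow_natCast, inv_pow]

end QuantumInteger

section StandardBasis

variable {K : Type*} [Field K] {n : ℕ}

variable (K n) in
def spanBelow (i : ℕ) : Submodule K (Fin (n + 1) → K) :=
  span K (Pi.basisFun K (Fin (n + 1)) '' {j | (j : ℕ) < i})

theorem single_mem_spanBelow {i : ℕ} {j : Fin (n + 1)} (h : (j : ℕ) < i) :
    Pi.single j 1 ∈ spanBelow K n i :=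
  Pi.basisFun_apply K (Fin (n + 1)) j ▸ subset_span (Set.mem_image_of_mem _ h)

theorem single_notMem_spanBelow {i : ℕ} {j : Fin (n + 1)} (h : i ≤ j) :
    Pi.single j 1 ∉ spanBelow K n i := by
  rw [← Pi.basisFun_apply K]
  exact (Pi.basisFun K _).linearIndependent.notMem_span_image (by simpa using h)

theorem spanBelow_le {i : ℕ} {p : Submodule K (Fin (n + 1) → K)}
    (h : ∀ j : Fin (n + 1), (j : ℕ) < i → Pi.single j 1 ∈ p) : spanBelow K n i ≤ p := by
  rw [spanBelow, span_le]
  rintro _ ⟨j, hj, rfl⟩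
  simpa using h j hj

theorem spanBelow_mono : Monotone (spanBelow K n) :=
  fun _ _ h => span_mono (Set.image_mono fun _ hj => lt_of_lt_of_le hj h)

theorem spanBelow_zero : spanBelow K n 0 = ⊥ := by simp [spanBelow]

theorem spanBelow_eq_top {i : ℕ} (h : n < i) : spanBelow K n i = ⊤ := by
  have huniv : {j : Fin (n + 1) | (j : ℕ) < i} = Set.univ :=
    Set.eq_univ_of_forall fun j => Nat.lt_of_lt_of_le j.isLt h
  rw [spanBelow, huniv, Set.image_univ, Module.Basis.span_eq]

theorem spanBelow_ne_bot {i : ℕ} (h : 0 < i) : spanBelow K n i ≠ ⊥ :=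
  (Submodule.ne_bot_iff _).2
    ⟨_, single_mem_spanBelow (j := 0) h, Pi.single_ne_zero_iff.2 one_ne_zero⟩

theorem spanBelow_ne_top {i : ℕ} (h : i ≤ n) : spanBelow K n i ≠ ⊤ :=
  fun htop => single_notMem_spanBelow (j := ⟨i, by omega⟩) le_rfl (htop ▸ mem_top)

theorem spanBelow_le_comap_of_apply_single {k : Module.End K (Fin (n + 1) → K)}
    {μ : Fin (n + 1) → K} (hk : ∀ j, k (Pi.single j 1) = μ j • Pi.single j 1) (i : ℕ) :
    spanBelow K n i ≤ (spanBelow K n i).comap k :=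
  spanBelow_le fun j hj => by
    rw [mem_comap, hk]
    exact smul_mem _ _ (single_mem_spanBelow hj)

end StandardBasis

section ShiftOperators

variable {K : Type*} [Field K] {n : ℕ}

theorem spanBelow_succ_le_comap_of_lowering {e : Module.End K (Fin (n + 1) → K)} {d : Fin n → K}
    (he0 : e (Pi.single 0 1) = 0)
    (he : ∀ j : Fin n, e (Pi.single j.succ 1) = d j • Pi.single j.castSucc 1) (i : ℕ) :
    spanBelow K n (i + 1) ≤ (spanBelow K n i).comap e := by
  refine spanBelow_le fun j hj => ?_
  cases j using Fin.cases with
  | zero => simp [he0]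
  | succ j =>
    rw [mem_comap, he]
    exact smul_mem _ _ (single_mem_spanBelow (by simp only [Fin.val_succ, Fin.val_castSucc] at hj ⊢; omega))

theorem spanBelow_le_comap_of_lowering {e : Module.End K (Fin (n + 1) → K)} {d : Fin n → K}
    (he0 : e (Pi.single 0 1) = 0)
    (he : ∀ j : Fin n, e (Pi.single j.succ 1) = d j • Pi.single j.castSucc 1) (i : ℕ) :
    spanBelow K n i ≤ (spanBelow K n i).comap e :=
  (spanBelow_mono i.le_succ).trans (spanBelow_succ_le_comap_of_lowering he0 he i)

theorem isNilpotent_of_lowering {e : Module.End K (Fin (n + 1) → K)} {d : Fin n → K}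
    (he0 : e (Pi.single 0 1) = 0)
    (he : ∀ j : Fin n, e (Pi.single j.succ 1) = d j • Pi.single j.castSucc 1) :
    IsNilpotent e := by
  have hpow : ∀ m i x, x ∈ spanBelow K n (i + m) → (e ^ m) x ∈ spanBelow K n i := by
    intro m
    induction m with
    | zero => simp
    | succ m ih =>
      intro i x hx
      rw [pow_succ, Module.End.mul_apply]
      exact ih i _ (spanBelow_succ_le_comap_of_lowering he0 he (i + m) hx)
  refine ⟨n + 1, LinearMap.ext fun x => ?_⟩
  have hx := hpow (n + 1) 0 x (by rw [spanBelow_eq_top (by omega)]; exact mem_top)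
  rwa [spanBelow_zero, mem_bot] at hx

theorem lowering_apply_castSucc {e : Module.End K (Fin (n + 1) → K)} {d : Fin n → K}
    (he0 : e (Pi.single 0 1) = 0)
    (he : ∀ j : Fin n, e (Pi.single j.succ 1) = d j • Pi.single j.castSucc 1)
    (w : Fin (n + 1) → K) (j : Fin n) : e w j.castSucc = d j * w j.succ := by
  have hlin : LinearMap.proj j.castSucc ∘ₗ e =
      d j • LinearMap.proj (R := K) (φ := fun _ => K) j.succ := by
    refine (Pi.basisFun K (Fin (n + 1))).ext fun k => ?_
    rw [Pi.basisFun_apply]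
    cases k using Fin.cases with
    | zero => simp [he0]
    | succ k => by_cases hkj : k = j <;> simp [he, hkj]
  simpa using LinearMap.congr_fun hlin w

theorem eq_smul_single_zero_of_lowering {e : Module.End K (Fin (n + 1) → K)} {d : Fin n → K}
    (he0 : e (Pi.single 0 1) = 0)
    (he : ∀ j : Fin n, e (Pi.single j.succ 1) = d j • Pi.single j.castSucc 1)
    (hd : ∀ j, d j ≠ 0) {w : Fin (n + 1) → K} (hw : e w = 0) : w = w 0 • Pi.single 0 1 := by
  funext k
  cases k using Fin.cases with
  | zero => simp
  | succ j =>
    have h := lowering_apply_castSucc he0 he w j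
    rw [hw, Pi.zero_apply, eq_comm, mul_eq_zero] at h
    simpa [Fin.succ_ne_zero j] using h.resolve_left (hd j)

theorem single_zero_mem_of_lowering {e : Module.End K (Fin (n + 1) → K)} {d : Fin n → K}
    (he0 : e (Pi.single 0 1) = 0)
    (he : ∀ j : Fin n, e (Pi.single j.succ 1) = d j • Pi.single j.castSucc 1)
    (hd : ∀ j, d j ≠ 0) {W : Submodule K (Fin (n + 1) → K)} (hW : W ≤ W.comap e) (hW0 : W ≠ ⊥) :
    Pi.single 0 1 ∈ W := by
  obtain ⟨w, hwW, hw0, hew⟩ :=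
    exists_ne_zero_mem_ker_of_isNilpotent (isNilpotent_of_lowering he0 he) hW hW0
  have hw := eq_smul_single_zero_of_lowering he0 he hd hew
  have hw00 : w 0 ≠ 0 := fun h => hw0 (by rw [hw, h, zero_smul])
  rw [hw] at hwW
  exact (smul_mem_iff _ hw00).1 hwW

theorem single_mem_of_raising {f : Module.End K (Fin (n + 1) → K)} {c : Fin n → K}
    (hf : ∀ j : Fin n, f (Pi.single j.castSucc 1) = c j • Pi.single j.succ 1)
    (hc : ∀ j, c j ≠ 0) {W : Submodule K (Fin (n + 1) → K)} (hW : W ≤ W.comap f)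
    (h0 : Pi.single 0 1 ∈ W) (j : Fin (n + 1)) : Pi.single j 1 ∈ W := by
  induction j using Fin.induction with
  | zero => exact h0
  | succ j ih =>
    have h := hW ih
    rw [mem_comap, hf] at h
    exact (smul_mem_iff _ (hc j)).1 h

theorem spanBelow_le_comap_of_raising {f : Module.End K (Fin (n + 1) → K)} {c : Fin n → K}
    (hf : ∀ j : Fin n, f (Pi.single j.castSucc 1) = c j • Pi.single j.succ 1)
    {j : Fin n} (hj : c j = 0) :
    spanBelow K n (j + 1) ≤ (spanBelow K n (j + 1)).comap f := by
  refine spanBelow_le fun k hk => ?_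
  cases k using Fin.lastCases with
  | last => simp only [Fin.val_last] at hk; omega
  | cast k =>
    rw [mem_comap, hf]
    obtain rfl | hkj := eq_or_ne k j
    · simp [hj]
    · exact smul_mem _ _ (single_mem_spanBelow (by simp only [Fin.val_succ, Fin.val_castSucc] at hk ⊢; omega))

theorem eq_bot_or_eq_top_of_lowering_of_raising {e f : Module.End K (Fin (n + 1) → K)}
    {c d : Fin n → K} (he0 : e (Pi.single 0 1) = 0)
    (he : ∀ j : Fin n, e (Pi.single j.succ 1) = d j • Pi.single j.castSucc 1) (hd : ∀ j, d j ≠ 0)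
    (hf : ∀ j : Fin n, f (Pi.single j.castSucc 1) = c j • Pi.single j.succ 1) (hc : ∀ j, c j ≠ 0)
    {W : Submodule K (Fin (n + 1) → K)} (hWe : W ≤ W.comap e) (hWf : W ≤ W.comap f) :
    W = ⊥ ∨ W = ⊤ := by
  refine or_iff_not_imp_left.2 fun hW0 => eq_top_iff.2 ?_
  rw [← spanBelow_eq_top (i := n + 1) n.lt_succ_self]
  exact spanBelow_le fun j _ =>
    single_mem_of_raising hf hc hWf (single_zero_mem_of_lowering he0 he hd hWe hW0) j

end ShiftOperators

/-- For `n ∈ ℕ` and `ε = ±1`, the `(n+1)`-dimensional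
`U_q(sl₂)`-module `V(n,ε)` (with its defining basis action) is irreducible (i.e. the
only subspaces invariant under `E`, `F`, `K`, `K⁻¹` are `⊥` and `⊤`) if and only if
`q^{2i} ≠ 1` for all `1 ≤ i ≤ n`. -/
theorem uq_Vn_irreducible_iff (F : Type*) [Field F] (q : F) (hq0 : q ≠ 0)
    (n : ℕ) (ε : F) (hε : ε = 1 ∨ ε = -1)
    (eM fM kM kinvM : Module.End F (Fin (n + 1) → F))
    (hk : ∀ i : ℕ, ∀ h : i ≤ n, kM (Pi.single ⟨i, by omega⟩ 1 : Fin (n + 1) → F) =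
        (ε * q ^ ((n : ℤ) - 2 * i)) • (Pi.single ⟨i, by omega⟩ 1 : Fin (n + 1) → F))
    (hkinv : ∀ i : ℕ, ∀ h : i ≤ n,
        kinvM (Pi.single ⟨i, by omega⟩ 1 : Fin (n + 1) → F) =
        (ε⁻¹ * q ^ (2 * (i : ℤ) - n)) • (Pi.single ⟨i, by omega⟩ 1 : Fin (n + 1) → F))
    (hf : ∀ i : ℕ, ∀ h : i < n, fM (Pi.single ⟨i, by omega⟩ 1 : Fin (n + 1) → F) =
        ((q ^ (i + 1) - q⁻¹ ^ (i + 1)) / (q - q⁻¹)) •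
          (Pi.single ⟨i + 1, by omega⟩ 1 : Fin (n + 1) → F))
    (he0 : eM (Pi.single ⟨0, by omega⟩ 1 : Fin (n + 1) → F) = 0)
    (he : ∀ i : ℕ, ∀ h : i < n, eM (Pi.single ⟨i + 1, by omega⟩ 1 : Fin (n + 1) → F) =
        (ε * ((q ^ ((n : ℤ) - i) - q ^ ((i : ℤ) - n)) / (q - q⁻¹))) •
          (Pi.single ⟨i, by omega⟩ 1 : Fin (n + 1) → F)) :
    (∀ W : Submodule F (Fin (n + 1) → F),
        W ≤ W.comap eM → W ≤ W.comap fM → W ≤ W.comap kM → W ≤ W.comap kinvM →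
        W = ⊥ ∨ W = ⊤)
      ↔ (∀ i : ℕ, 1 ≤ i → i ≤ n → q ^ (2 * i) ≠ 1) := by
  have hf' : ∀ j : Fin n, fM (Pi.single j.castSucc 1) = qInt q (j + 1) • Pi.single j.succ 1 :=
    fun j => hf j j.isLt
  have he' : ∀ j : Fin n,
      eM (Pi.single j.succ 1) = (ε * qInt q (n - j)) • Pi.single j.castSucc 1 := fun j => by
    rw [qInt, ← zpow_sub_zpow_eq_pow_sub_inv_pow q j.isLt.le]
    exact he j j.isLt
  constructor
  · intro hirr i hi1 hin hqi
    let j : Fin n := ⟨i - 1, by omega⟩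
    have hj : qInt q (j + 1) = 0 :=
      (qInt_eq_zero_iff hq0 _).2 (Or.inl (by rwa [Nat.sub_add_cancel hi1]))
    rcases hirr (spanBelow F n (j + 1)) (spanBelow_le_comap_of_lowering he0 he' _)
      (spanBelow_le_comap_of_raising hf' hj)
      (spanBelow_le_comap_of_apply_single (fun j => hk j j.is_le) _)
      (spanBelow_le_comap_of_apply_single (fun j => hkinv j j.is_le) _) with h | h
    · exact spanBelow_ne_bot j.succ_pos h
    · exact spanBelow_ne_top j.isLt h
  · intro hroots W hWe hWf _ _
    have hqInt : ∀ k, 1 ≤ k → k ≤ n → qInt q k ≠ 0 := fun k hk1 hkn => by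
      rw [Ne, qInt_eq_zero_iff hq0]
      exact not_or.2 ⟨hroots k hk1 hkn, by simpa using hroots 1 le_rfl (by omega)⟩
    have hε0 : ε ≠ 0 := by rcases hε with rfl | rfl <;> norm_num
    exact eq_bot_or_eq_top_of_lowering_of_raising he0 he'
      (fun j => mul_ne_zero hε0 (hqInt _ (by omega) (by omega))) hf'
      (fun j => hqInt _ (by omega) (by omega)) hWe hWf
end

section
/- In U_q(sl_2) ⊗ U_q(sl_2), the comultiplication of the normalized Casimir element satisfies Δ(Λ) = q^2(q-q^{-1})^2 KF ⊗ K^{-1}E + Λ ⊗ K^{-1} + K ⊗ Λ − (q+q^{-1}) K ⊗ K^{-1} + (q-q^{-1})^2 E ⊗ F. -/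
open scoped TensorProduct

/-- In `U_q(sl₂) ⊗ U_q(sl₂)`,
`Δ(Λ) = q²(q-q⁻¹)² KF ⊗ K⁻¹E + Λ ⊗ K⁻¹ + K ⊗ Λ − (q+q⁻¹) K ⊗ K⁻¹ + (q-q⁻¹)² E ⊗ F`,
where `Λ = (q-q⁻¹)² EF + q⁻¹K + qK⁻¹` is the normalized Casimir element. -/
theorem uq_comul_casimir (F : Type*) [Field F] (q : F) (hq0 : q ≠ 0)
    (hq4 : q ^ 4 ≠ 1)
    (U : Type*) [Ring U] [Algebra F U] (E K Kinv Fg : U)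
    (hKKinv : K * Kinv = 1) (hKinvK : Kinv * K = 1)
    (hKE : K * E = q ^ 2 • (E * K))
    (hKF : K * Fg = (q ^ 2)⁻¹ • (Fg * K))
    (hEF : E * Fg - Fg * E = (q - q⁻¹)⁻¹ • (K - Kinv))
    (Lam : U) (hLam : Lam = (q - q⁻¹) ^ 2 • (E * Fg) + q⁻¹ • K + q • Kinv)
    (Δ : U →ₐ[F] U ⊗[F] U)
    (hΔE : Δ E = E ⊗ₜ[F] 1 + K ⊗ₜ[F] E)
    (hΔF : Δ Fg = Fg ⊗ₜ[F] Kinv + 1 ⊗ₜ[F] Fg)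
    (hΔK : Δ K = K ⊗ₜ[F] K)
    (hΔKinv : Δ Kinv = Kinv ⊗ₜ[F] Kinv) :
    Δ Lam = (q ^ 2 * (q - q⁻¹) ^ 2) • ((K * Fg) ⊗ₜ[F] (Kinv * E))
        + Lam ⊗ₜ[F] Kinv + K ⊗ₜ[F] Lam
        - (q + q⁻¹) • (K ⊗ₜ[F] Kinv)
        + (q - q⁻¹) ^ 2 • (E ⊗ₜ[F] Fg) := by
  have hEKinv : E * Kinv = (q ^ 2) • (Kinv * E) := by
    have h1 : Kinv * (K * E) * Kinv = E * Kinv := by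
      rw [← mul_assoc, hKinvK, one_mul]
    calc E * Kinv = Kinv * (K * E) * Kinv := h1.symm
      _ = (q ^ 2) • (Kinv * E) := by
          rw [hKE, mul_smul_comm, smul_mul_assoc, mul_assoc Kinv (E * K) Kinv, mul_assoc E K Kinv, hKKinv, mul_one]
  subst hLam
  simp only [map_add, map_smul, map_mul, hΔE, hΔF, hΔK, hΔKinv]
  simp only [add_mul, mul_add, Algebra.TensorProduct.tmul_mul_tmul, mul_one, one_mul,
    hEKinv, TensorProduct.tmul_smul, ← TensorProduct.smul_tmul', TensorProduct.add_tmul,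
    TensorProduct.tmul_add]
  module
end
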